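/- arXiv:1205.1421 — 2 statements merged into one kernel-verified Lean document; each statement's English description precedes it below -/
import Mathlib

section
/- Let U : ℝ⁵ → ℝ be a positive C² function. For x ∈ ℝ⁵ and λ > 0, define the Kelvin transform U^{λ,x}(y) = (λ/|y−x|)^{3} · U(x + λ²(y−x)/|y−x|²). If U(y) ≥ U^{λ,x}(y) for all x ∈ ℝ⁵, all λ > 0, and all y with |y−x| ≥ λ, then U is constant. -/
noncomputable def kelvin (U : EuclideanSpace ℝ (Fin 5) → ℝ) (x : EuclideanSpace ℝ (Fin 5))
    (l : ℝ) (y : EuclideanSpace ℝ (Fin 5)) : ℝ :=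
  (l / ‖y - x‖) ^ 3 * U (x + (l ^ 2 / ‖y - x‖ ^ 2) • (y - x))

/-!
With centre `y - w` and radius `t * ‖w‖`, `0 < t < 1`, the domination hypothesis at `y` reads
`t ^ 3 * U (y + (t ^ 2 - 1) • w) ≤ U y`, with equality at `t = 1`. Differentiating at `t = 1` from
the left gives `0 ≤ 3 * U y + 2 * DU(y) w` for every `w ≠ 0`; a linear functional bounded below
off the origin vanishes, so `DU = 0` everywhere and `U` is constant.
-/

open Set Filter Topology

theorem HasDerivAt.nonneg_of_le_of_left {h : ℝ → ℝ} {d a b : ℝ} (hd : HasDerivAt h d b)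
    (hab : a < b) (hle : ∀ t ∈ Ioo a b, h t ≤ h b) : 0 ≤ d := by
  have hslope : Tendsto (slope h b) (𝓝[<] b) (𝓝 d) :=
    (hasDerivAt_iff_tendsto_slope.mp hd).mono_left (nhdsWithin_mono b fun _ ht => ne_of_lt ht)
  refine ge_of_tendsto hslope ?_
  filter_upwards [Ioo_mem_nhdsLT hab] with t ht
  rw [slope_def_field]
  exact div_nonneg_of_nonpos (by linarith [hle t ht]) (by linarith [ht.2])

theorem ContinuousLinearMap.eq_zero_of_forall_ne_zero_le_add {E : Type*}
    [NormedAddCommGroup E] [NormedSpace ℝ E] (f : E →L[ℝ] ℝ) (a : ℝ)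
    (hf : ∀ w ≠ 0, 0 ≤ a + f w) : f = 0 := by
  ext w
  by_contra hw
  have hw0 : w ≠ 0 := by rintro rfl; simp at hw
  have hfw : f w ≠ 0 := hw
  have := hf (-((|a| + 1) / f w) • w) (smul_ne_zero (neg_ne_zero.mpr (div_ne_zero (by positivity) hfw)) hw0)
  rw [map_smul, smul_eq_mul, neg_mul, div_mul_cancel₀ _ hfw] at this
  linarith [le_abs_self a]

theorem zero_le_mul_add_two_mul_fderiv {E : Type*} [NormedAddCommGroup E] [NormedSpace ℝ E]
    {U : E → ℝ} {y : E} (hU : DifferentiableAt ℝ U y) (k : ℕ) (w : E)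
    (hle : ∀ t ∈ Ioo (0 : ℝ) 1, t ^ k * U (y + (t ^ 2 - 1) • w) ≤ U y) :
    0 ≤ k * U y + 2 * fderiv ℝ U y w := by
  have hpath : HasDerivAt (fun t : ℝ => y + (t ^ 2 - 1) • w) ((2 : ℝ) • w) 1 := by
    simpa using (((hasDerivAt_pow 2 (1 : ℝ)).sub_const 1).smul_const w).const_add y
  have hU' : HasFDerivAt U (fderiv ℝ U y) (y + ((1 : ℝ) ^ 2 - 1) • w) := by
    simpa using hU.hasFDerivAt
  have hd := (hasDerivAt_pow k (1 : ℝ)).mul (hU'.comp_hasDerivAt 1 hpath)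
  have := hd.nonneg_of_le_of_left zero_lt_one (by simpa using hle)
  simpa [map_smul] using this

theorem kelvin_sub_mul_norm (U : EuclideanSpace ℝ (Fin 5) → ℝ) (y w : EuclideanSpace ℝ (Fin 5))
    (hw : w ≠ 0) (t : ℝ) :
    kelvin U (y - w) (t * ‖w‖) y = t ^ 3 * U (y + (t ^ 2 - 1) • w) := by
  have hw' : ‖w‖ ≠ 0 := norm_ne_zero_iff.mpr hw
  simp only [kelvin, sub_sub_cancel, mul_div_cancel_right₀ _ hw', mul_pow,
    mul_div_cancel_right₀ _ (pow_ne_zero 2 hw')]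
  congr 2
  module

theorem stmt0_general (U : EuclideanSpace ℝ (Fin 5) → ℝ) (hU : ContDiff ℝ 2 U)
    (hdom : ∀ (x : EuclideanSpace ℝ (Fin 5)) (l : ℝ), 0 < l →
      ∀ y, l ≤ ‖y - x‖ → kelvin U x l y ≤ U y) :
    ∃ c : ℝ, ∀ y, U y = c := by
  have hdiff : Differentiable ℝ U := hU.differentiable (by norm_num)
  have hfderiv (y : EuclideanSpace ℝ (Fin 5)) : fderiv ℝ U y = 0 := by
    suffices (2 : ℝ) • fderiv ℝ U y = 0 by simpa using this
    refine (2 • fderiv ℝ U y).eq_zero_of_forall_ne_zero_le_add (3 * U y) fun w hw => ?_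
    refine zero_le_mul_add_two_mul_fderiv (hdiff y) 3 w fun t ht => ?_
    have hw' : 0 < ‖w‖ := norm_pos_iff.mpr hw
    rw [← kelvin_sub_mul_norm U y w hw]
    exact hdom _ _ (mul_pos ht.1 hw') y (by simpa using mul_le_of_le_one_left hw'.le ht.2.le)
  exact ⟨U 0, fun y => is_const_of_fderiv_eq_zero hdiff hfderiv y 0⟩

/-- A positive C² function on ℝ⁵ dominating all of its Kelvin transforms is constant. -/
theorem stmt0 (U : EuclideanSpace ℝ (Fin 5) → ℝ) (hU : ContDiff ℝ 2 U)
    (hpos : ∀ y, 0 < U y)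
    (hdom : ∀ (x : EuclideanSpace ℝ (Fin 5)) (l : ℝ), 0 < l →
      ∀ y, l ≤ ‖y - x‖ → kelvin U x l y ≤ U y) :
    ∃ c : ℝ, ∀ y, U y = c :=
  stmt0_general U hU hdom
end

section
/- Let v : ℝ⁵ → ℝ be a positive C¹ function and define, in polar-type form, f(r, θ) = r^{3/2} v(rθ) for r > 0 and θ on the unit sphere S⁴. Suppose there exist r₀ > 0 and C > 0 such that ∂_r f(r, θ) > C r^{1/2} for all 0 < r < r₀ and all θ ∈ S⁴. Then for all λ, y with 0 < λ < |y| < r₀, writing y^λ = λ² y / |y|² and v^λ(y) = (λ/|y|)³ v(y^λ), one has v(y) − v^λ(y) ≥ C'' (|y| − λ) for some constant C'' > 0 depending only on C and r₀. -/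
/-!
Write `R = ‖y‖`, `θ = y / R` and `g t = t ^ (3/2) * v (t • θ)`. Since `|y^λ| = λ² / R`, the
scaling of the Kelvin transform gives exactly `g R - g (λ² / R) = R ^ (3/2) * (v y - v^λ y)`.
The mean value theorem with `g' t > C √t ≥ C √(λ² / R) = C λ / √R` on `(λ² / R, R)` then gives
`v y - v^λ y ≥ C λ / R² * (R - λ²/R) ≥ C λ₀ / r₀² * (R - λ)`.
-/

open Set

theorem mul_sub_le_image_sub_of_monotoneOn_le_deriv {f m : ℝ → ℝ} {a b : ℝ} (hab : a ≤ b)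
    (hf : DifferentiableOn ℝ f (Icc a b)) (hm : MonotoneOn m (Icc a b))
    (hle : ∀ x ∈ Ioo a b, m x ≤ deriv f x) : m a * (b - a) ≤ f b - f a := by
  refine (convex_Icc a b).mul_sub_le_image_sub_of_le_deriv hf.continuousOn
    (hf.mono interior_subset) (fun x hx => ?_) a (left_mem_Icc.2 hab) b (right_mem_Icc.2 hab) hab
  rw [interior_Icc] at hx
  exact (hm (left_mem_Icc.2 hab) (Ioo_subset_Icc_self hx) hx.1.le).trans (hle x hx)

section Kelvin

variable {E : Type*} [NormedAddCommGroup E] [NormedSpace ℝ E]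

noncomputable def kelvinTransform (k : ℕ) (v : E → ℝ) (l : ℝ) (y : E) : ℝ :=
  (l / ‖y‖) ^ k * v ((l ^ 2 / ‖y‖ ^ 2) • y)

theorem differentiableOn_rpow_mul_comp_smul {v : E → ℝ} (hv : Differentiable ℝ v) (p : ℝ)
    (θ : E) : DifferentiableOn ℝ (fun t : ℝ => t ^ p * v (t • θ)) (Ioi 0) := fun t ht =>
  ((Real.differentiableAt_rpow_const_of_ne p (ne_of_gt ht)).mul
    (hv.differentiableAt.comp t (differentiableAt_id.smul_const θ))).differentiableWithinAt

theorem rpow_mul_comp_smul_sub_kelvinTransform (v : E → ℝ) (k : ℕ) {y : E} (hy : y ≠ 0)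
    {l : ℝ} (hl : 0 ≤ l) :
    ‖y‖ ^ ((k : ℝ) / 2) * v (‖y‖ • ‖y‖⁻¹ • y)
        - (l ^ 2 / ‖y‖) ^ ((k : ℝ) / 2) * v ((l ^ 2 / ‖y‖) • ‖y‖⁻¹ • y) =
      ‖y‖ ^ ((k : ℝ) / 2) * (v y - kelvinTransform k v l y) := by
  have hR : 0 < ‖y‖ := norm_pos_iff.2 hy
  have hl_div_sqrt : l / √‖y‖ = √‖y‖ * (l / ‖y‖) := by
    have : 0 < √‖y‖ := Real.sqrt_pos.2 hR
    field_simp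
    rw [Real.sq_sqrt hR.le]
  have hs : l ^ 2 / ‖y‖ * ‖y‖⁻¹ = l ^ 2 / ‖y‖ ^ 2 := by ring
  rw [Real.rpow_div_two_eq_sqrt _ hR.le, Real.rpow_div_two_eq_sqrt _ (by positivity),
    Real.rpow_natCast, Real.rpow_natCast, Real.sqrt_div' _ hR.le, Real.sqrt_sq hl,
    smul_smul, smul_smul, mul_inv_cancel₀ hR.ne', one_smul, hs, hl_div_sqrt, kelvinTransform]
  ring

theorem mul_sub_le_sub_kelvinTransform {v : E → ℝ} (hv : Differentiable ℝ v) {C l : ℝ}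
    (hC : 0 ≤ C) (hl : 0 < l) {y : E} (hly : l < ‖y‖)
    (hderiv : ∀ x ∈ Ioo (l ^ 2 / ‖y‖) ‖y‖, C * x ^ ((1 : ℝ) / 2) ≤
      deriv (fun t : ℝ => t ^ ((3 : ℝ) / 2) * v (t • ‖y‖⁻¹ • y)) x) :
    C * l / ‖y‖ ^ 2 * (‖y‖ - l) ≤ v y - kelvinTransform 3 v l y := by
  have hR : 0 < ‖y‖ := hl.trans hly
  have hs : 0 < l ^ 2 / ‖y‖ := by positivity
  have hsl : l ^ 2 / ‖y‖ < l := by rw [div_lt_iff₀ hR]; nlinarith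
  have hmvt := mul_sub_le_image_sub_of_monotoneOn_le_deriv (hsl.trans hly).le
    ((differentiableOn_rpow_mul_comp_smul hv _ _).mono fun x hx => hs.trans_le hx.1)
    (fun a ha b _ hab => by gcongr; exact hs.le.trans ha.1) hderiv
  have hprofile := rpow_mul_comp_smul_sub_kelvinTransform v 3 (norm_pos_iff.1 hR) hl.le
  have hsqrt : 0 < √‖y‖ := Real.sqrt_pos.2 hR
  have hs_half : (l ^ 2 / ‖y‖) ^ ((1 : ℝ) / 2) = l / √‖y‖ := by
    rw [← Real.sqrt_eq_rpow, Real.sqrt_div' _ hR.le, Real.sqrt_sq hl.le]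
  have hR_three_halves : ‖y‖ ^ ((3 : ℝ) / 2) = ‖y‖ * √‖y‖ := by
    rw [Real.rpow_div_two_eq_sqrt _ hR.le, Real.rpow_ofNat, pow_succ, Real.sq_sqrt hR.le]
  simp only [Nat.cast_ofNat] at hprofile
  rw [hprofile, hs_half, hR_three_halves] at hmvt
  rw [div_mul_eq_mul_div, div_le_iff₀ (by positivity)]
  calc C * l * (‖y‖ - l) ≤ C * l * (‖y‖ - l ^ 2 / ‖y‖) := by gcongr
    _ = √‖y‖ * (C * (l / √‖y‖) * (‖y‖ - l ^ 2 / ‖y‖)) := by field_simp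
    _ ≤ √‖y‖ * (‖y‖ * √‖y‖ * (v y - kelvinTransform 3 v l y)) := by gcongr
    _ = (v y - kelvinTransform 3 v l y) * ‖y‖ ^ 2 := by
      linear_combination ‖y‖ * (v y - kelvinTransform 3 v l y) * Real.sq_sqrt hR.le

end Kelvin

theorem stmt5_general (v : EuclideanSpace ℝ (Fin 5) → ℝ) (hv : ContDiff ℝ 1 v)
    (r₀ C lam0 : ℝ) (hr₀ : 0 < r₀) (hC : 0 < C) (hlam0 : 0 < lam0)
    (hderiv : ∀ θ : EuclideanSpace ℝ (Fin 5), ‖θ‖ = 1 → ∀ r : ℝ, 0 < r → r < r₀ →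
      C * r ^ ((1 : ℝ) / 2) < deriv (fun s : ℝ => s ^ ((3 : ℝ) / 2) * v (s • θ)) r) :
    ∃ C'' > (0 : ℝ), ∀ (l : ℝ) (y : EuclideanSpace ℝ (Fin 5)),
      lam0 ≤ l → l < ‖y‖ → ‖y‖ < r₀ →
      C'' * (‖y‖ - l) ≤ v y - (l / ‖y‖) ^ 3 * v ((l ^ 2 / ‖y‖ ^ 2) • y) := by
  refine ⟨C * lam0 / r₀ ^ 2, by positivity, fun l y hl hly hyr => ?_⟩
  have hl0 : 0 < l := hlam0.trans_le hl
  have hy : y ≠ 0 := norm_pos_iff.1 (hl0.trans hly)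
  have hbound := mul_sub_le_sub_kelvinTransform (hv.differentiable one_ne_zero) hC.le hl0 hly
    fun x hx => (hderiv _ (norm_smul_inv_norm hy) x
      ((by positivity : (0 : ℝ) < l ^ 2 / ‖y‖).trans hx.1) (hx.2.trans hyr)).le
  refine le_trans ?_ hbound
  gcongr

theorem stmt5 (v : EuclideanSpace ℝ (Fin 5) → ℝ) (hv : ContDiff ℝ 1 v)
    (hpos : ∀ y, 0 < v y) (r₀ C lam0 : ℝ) (hr₀ : 0 < r₀) (hC : 0 < C) (hlam0 : 0 < lam0)
    (hderiv : ∀ θ : EuclideanSpace ℝ (Fin 5), ‖θ‖ = 1 → ∀ r : ℝ, 0 < r → r < r₀ →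
      C * r ^ ((1 : ℝ) / 2) < deriv (fun s : ℝ => s ^ ((3 : ℝ) / 2) * v (s • θ)) r) :
    ∃ C'' > (0 : ℝ), ∀ (l : ℝ) (y : EuclideanSpace ℝ (Fin 5)),
      lam0 ≤ l → l < ‖y‖ → ‖y‖ < r₀ →
      C'' * (‖y‖ - l) ≤ v y - (l / ‖y‖) ^ 3 * v ((l ^ 2 / ‖y‖ ^ 2) • y) :=
  stmt5_general v hv r₀ C lam0 hr₀ hC hlam0 hderiv
end
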